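/- For every integer k ≥ 2, every integer J ≥ 0, every integer j ≥ J, and every integer i with 1 ≤ i ≤ k, the series G_{(k-1)J+i} admits the expansion G_{(k-1)J+i} = ∑_{ℓ=1}^{k} h^{J,j}_{i,ℓ} · G_{(k-1)j+ℓ}, where the h^{J,j}_{i,ℓ} ∈ ℂ[q] are the polynomials determined by the initial conditions h^{J,J}_{i,ℓ} = δ_{i,ℓ} and the stated recursion. -/

import Mathlib

noncomputable section
namespace BGG

open PowerSeries

abbrev PS := PowerSeries ℂ
abbrev LS := LaurentSeries ℂ

/-- The canonical embedding of `ℂ[[q]]` into `ℂ((q))`. -/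
def toLS : PS →+* LS := HahnSeries.ofPowerSeries ℤ ℂ

/-- The formal variable `q`, as a Laurent series. -/
def qq : LS := toLS PowerSeries.X

/-- Coefficientwise infinite sum of a sequence of power series. -/
def seriesSum (f : ℕ → PS) : PS :=
  PowerSeries.mk fun N => ∑' n : ℕ, PowerSeries.coeff (R := ℂ) N (f n)

/-- The q-Pochhammer symbol `(b; p)_n = ∏_{m=0}^{n-1} (1 - b p^m)`. -/
def poch (b p : PS) (n : ℕ) : PS := ∏ m ∈ Finset.range n, (1 - b * p ^ m)

/-- `F(q) = ∏_{m ≥ 1, m ≢ 2 mod 4} (1 - q^m)`, defined coefficientwise via its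
(stabilizing) partial products. -/
def Fprod : PS :=
  PowerSeries.mk fun N =>
    PowerSeries.coeff (R := ℂ) N
      (∏ m ∈ Finset.Icc 1 N, if m % 4 = 2 then 1 else 1 - (X : PS) ^ m)

/-- The shelf-0 official series
`G_i = F(q)⁻¹ ∑_{n ≥ 0} (-1)^n q^{(4k-2)C(n,2) + (2i+2k-3)n} (1 - q^{(2k-2i+1)(2n+1)})`. -/
def Gbase (k i : ℕ) : LS :=
  (toLS Fprod)⁻¹ *
    toLS (seriesSum fun n =>
      (-1 : PS) ^ n * (X : PS) ^ ((4*k-2) * n.choose 2 + (2*i+2*k-3)*n) *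
        (1 - (X : PS) ^ ((2*k-2*i+1)*(2*n+1))))

/-- The ghost series on shelf `j`, given the official series `Gj` on shelf `j`:
`tildeG_{(k-1)j+i} = (G_{(k-1)j+i-1} + q^{2(j+1)} G_{(k-1)j+i+1})/(1+q^{2(j+1)})` for
`2 ≤ i ≤ k-1`, and
`tildeG_{(k-1)j+k} = (G_{(k-1)j+k-1} - q^{2j+1} G_{(k-1)j+k})/(1+q^{2(j+1)})`. -/
def ghostOf (k j : ℕ) (Gj : ℕ → LS) (i : ℕ) : LS :=
  if i = k then (Gj (k-1) - qq ^ (2*j+1) * Gj k) * (1 + qq ^ (2*j+2))⁻¹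
  else (Gj (i-1) + qq ^ (2*j+2) * Gj (i+1)) * (1 + qq ^ (2*j+2))⁻¹

/-- The official series on shelf `j+1`, given the official series `Gj` on shelf `j`:
`G_{(k-1)(j+1)+1} = G_{(k-1)j+k}` and, for `2 ≤ i ≤ k`,
`G_{(k-1)(j+1)+i} = q^{-2(j+1)(i-1)}(G_{(k-1)j+k-i+1} - tildeG_{(k-1)j+k-i+2})
                    - q^{-1} G_{(k-1)(j+1)+i-1}`. -/
def nextShelf (k j : ℕ) (Gj : ℕ → LS) : ℕ → LS
  | 0 => 0
  | 1 => Gj k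
  | (i+2) =>
      (Gj (k-(i+2)+1) - ghostOf k j Gj (k-(i+2)+2)) * (qq ^ (2*(j+1)*(i+1)))⁻¹
        - qq⁻¹ * nextShelf k j Gj (i+1)

/-- `Gsh k j i` is the official series `G_{(k-1)j+i}` (for `1 ≤ i ≤ k`). -/
def Gsh (k : ℕ) : ℕ → ℕ → LS
  | 0 => Gbase k
  | (j+1) => nextShelf k j (Gsh k j)

/-- `tGsh k j i` is the ghost series `tildeG_{(k-1)j+i}` (for `2 ≤ i ≤ k`). -/
def tGsh (k j : ℕ) : ℕ → LS := ghostOf k j (Gsh k j)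

/-- The polynomials `h^{J,j}_{i,ℓ}` (here `d = j - J`), determined by the initial
condition `h^{J,J}_{i,ℓ} = δ_{i,ℓ}` and, for `j ≥ J+1`,
`h^{J,j}_{i,ℓ} = q^{2j(ℓ-1)} (q^{2j-1} ∑_{1 ≤ m ≤ k-ℓ, m ≡ ℓ+k (2)} h^{J,j-1}_{i,m}
                               + ∑_{1 ≤ m ≤ k-ℓ+1, m ≢ ℓ+k (2)} h^{J,j-1}_{i,m})
 + (1-δ_{ℓ,1}) q^{2j(ℓ-2)} (q^{2j-1} ∑_{1 ≤ m ≤ k-ℓ, m ≡ ℓ+k (2)} h^{J,j-1}_{i,m}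
                               + ∑_{1 ≤ m ≤ k-ℓ+1, m ≢ ℓ+k (2)} h^{J,j-1}_{i,m})`. -/
def hpoly (k J i : ℕ) : ℕ → ℕ → Polynomial ℂ
  | 0, l => if i = l then 1 else 0
  | (d+1), l =>
      Polynomial.X ^ (2*(J+d+1)*(l-1)) *
        (Polynomial.X ^ (2*(J+d+1)-1) *
            ∑ m ∈ (Finset.Icc 1 (k-l)).filter (fun m => (m + l + k) % 2 = 0),
              hpoly k J i d m
          + ∑ m ∈ (Finset.Icc 1 (k-l+1)).filter (fun m => (m + l + k) % 2 = 1),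
              hpoly k J i d m)
      + (if l = 1 then 0 else
          Polynomial.X ^ (2*(J+d+1)*(l-2)) *
            (Polynomial.X ^ (2*(J+d+1)-1) *
                ∑ m ∈ (Finset.Icc 1 (k-l)).filter (fun m => (m + l + k) % 2 = 0),
                  hpoly k J i d m
              + ∑ m ∈ (Finset.Icc 1 (k-l+1)).filter (fun m => (m + l + k) % 2 = 1),
                  hpoly k J i d m))


-- ========== auxiliary development ==========

lemma toLS_inj : Function.Injective toLS := HahnSeries.ofPowerSeries_injective

lemma qq_ne_zero : qq ≠ 0 := by
  intro h
  have h2 : toLS PowerSeries.X = toLS 0 := by simpa [qq] using h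
  exact PowerSeries.X_ne_zero (toLS_inj h2)

lemma one_add_qq_pow_ne (n : ℕ) (hn : 0 < n) : (1 : LS) + qq ^ n ≠ 0 := by
  intro h
  have h2 : toLS (1 + PowerSeries.X ^ n) = toLS 0 := by
    simpa [qq, map_add, map_pow, map_one] using h
  have h3 := toLS_inj h2
  have hc := congrArg (PowerSeries.constantCoeff (R := ℂ)) h3
  simp [map_add, map_pow, hn.ne'] at hc

/-- coercion of polynomials all the way into Laurent series, as a ring hom -/
def toL : Polynomial ℂ →+* LS := toLS.comp (Polynomial.coeToPowerSeries.ringHom)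

lemma toL_apply (p : Polynomial ℂ) : toLS (↑p : PS) = toL p := rfl

lemma toL_X : toL Polynomial.X = qq := by
  rw [toL, RingHom.comp_apply, Polynomial.coeToPowerSeries.ringHom_apply, Polynomial.coe_X]; rfl

lemma toL_X_pow (n : ℕ) : toL (Polynomial.X ^ n) = qq ^ n := by rw [map_pow, toL_X]

/-- closed form for the one-step polynomials -/
lemma hpoly_one (k J m l : ℕ) :
    hpoly k J m 1 l =
      (Polynomial.X ^ (2*(J+1)*(l-1)) +
          if l = 1 then 0 else Polynomial.X ^ (2*(J+1)*(l-2))) *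
        (Polynomial.X ^ (2*(J+1)-1) *
            (if (1 ≤ m ∧ m ≤ k - l) ∧ (m + l + k) % 2 = 0 then 1 else 0)
          + (if (1 ≤ m ∧ m ≤ k - l + 1) ∧ (m + l + k) % 2 = 1 then 1 else 0)) := by
  have e0 : ∑ m' ∈ (Finset.Icc 1 (k-l)).filter (fun m' => (m' + l + k) % 2 = 0),
      hpoly k J m 0 m'
      = (if (1 ≤ m ∧ m ≤ k - l) ∧ (m + l + k) % 2 = 0 then (1 : Polynomial ℂ) else 0) := by
    simp only [hpoly]
    rw [Finset.sum_ite_eq]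
    simp [Finset.mem_filter, Finset.mem_Icc]
  have e1 : ∑ m' ∈ (Finset.Icc 1 (k-l+1)).filter (fun m' => (m' + l + k) % 2 = 1),
      hpoly k J m 0 m'
      = (if (1 ≤ m ∧ m ≤ k - l + 1) ∧ (m + l + k) % 2 = 1 then (1 : Polynomial ℂ) else 0) := by
    simp only [hpoly]
    rw [Finset.sum_ite_eq]
    simp [Finset.mem_filter, Finset.mem_Icc]
  show hpoly k J m (0+1) l = _
  rw [hpoly, e0, e1]
  split_ifs <;> ring

/-- the compositional recursion for hpoly -/
lemma hpoly_succ (k J i d l : ℕ) (hl : 1 ≤ l) (hlk : l ≤ k) :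
    hpoly k J i (d+1) l = ∑ m ∈ Finset.Icc 1 k, hpoly k J i d m * hpoly k (J+d) m 1 l := by
  have conv0 : ∀ (n : ℕ), n ≤ k → ∀ (r : ℕ),
      ∑ m ∈ Finset.Icc 1 k,
        hpoly k J i d m * (if (1 ≤ m ∧ m ≤ n) ∧ (m + l + k) % 2 = r then 1 else 0)
        = ∑ m ∈ (Finset.Icc 1 n).filter (fun m => (m + l + k) % 2 = r), hpoly k J i d m := by
    intro n hn r
    have h1 : ∀ m, hpoly k J i d m * (if (1 ≤ m ∧ m ≤ n) ∧ (m + l + k) % 2 = r then 1 else 0)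
        = if (1 ≤ m ∧ m ≤ n) ∧ (m + l + k) % 2 = r then hpoly k J i d m else 0 := by
      intro m; split_ifs <;> simp
    simp_rw [h1]
    rw [← Finset.sum_filter]
    apply Finset.sum_congr _ (fun _ _ => rfl)
    ext m
    simp only [Finset.mem_filter, Finset.mem_Icc]
    constructor
    · rintro ⟨-, ⟨h2, h3⟩, h4⟩; exact ⟨⟨h2, h3⟩, h4⟩
    · rintro ⟨⟨h2, h3⟩, h4⟩; exact ⟨⟨h2, le_trans h3 hn⟩, ⟨h2, h3⟩, h4⟩
  have c0 := conv0 (k-l) (by omega : k - l ≤ k) 0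
  have c1 := conv0 (k-l+1) (by omega : k - l + 1 ≤ k) 1
  have e1 : ∑ m ∈ Finset.Icc 1 k, hpoly k J i d m * hpoly k (J+d) m 1 l
      = ((Polynomial.X ^ (2*(J+d+1)*(l-1)) +
            if l = 1 then 0 else Polynomial.X ^ (2*(J+d+1)*(l-2))) *
          Polynomial.X ^ (2*(J+d+1)-1)) *
          (∑ m ∈ Finset.Icc 1 k, hpoly k J i d m *
            (if (1 ≤ m ∧ m ≤ k - l) ∧ (m + l + k) % 2 = 0 then 1 else 0))
        + (Polynomial.X ^ (2*(J+d+1)*(l-1)) +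
            if l = 1 then 0 else Polynomial.X ^ (2*(J+d+1)*(l-2))) *
          (∑ m ∈ Finset.Icc 1 k, hpoly k J i d m *
            (if (1 ≤ m ∧ m ≤ k - l + 1) ∧ (m + l + k) % 2 = 1 then 1 else 0)) := by
    rw [Finset.mul_sum, Finset.mul_sum, ← Finset.sum_add_distrib]
    refine Finset.sum_congr rfl fun m _ => ?_
    rw [hpoly_one]
    ring
  rw [e1, c0, c1, hpoly]
  split_ifs <;> ring

/-- `G_{(k-1)(j+1)+1} = G_{(k-1)j+k}` -/
lemma Gsh_one (k j : ℕ) : Gsh k (j+1) 1 = Gsh k j k := rfl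

/-- `G_{(k-1)j+(k-1)}` in terms of shelf `j+1` -/
lemma Gsh_km1 (k j : ℕ) (hk : 2 ≤ k) :
    Gsh k j (k-1) = (1 + qq^(2*j+2)) * Gsh k (j+1) 2 + qq^(2*j+1) * Gsh k (j+1) 1 := by
  have hq : qq ≠ 0 := qq_ne_zero
  have hA : (1 : LS) + qq^(2*j+2) ≠ 0 := one_add_qq_pow_ne _ (by omega)
  have h2 : Gsh k (j+1) 2 = (Gsh k j (k-2+1) - ghostOf k j (Gsh k j) (k-2+2)) *
      (qq ^ (2*(j+1)*(0+1)))⁻¹ - qq⁻¹ * Gsh k j k := rfl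
  have e1 : k - 2 + 1 = k - 1 := by omega
  have e2 : k - 2 + 2 = k := by omega
  rw [e1, e2] at h2
  have hg : ghostOf k j (Gsh k j) k
      = (Gsh k j (k-1) - qq^(2*j+1) * Gsh k j k) * (1 + qq^(2*j+2))⁻¹ := by
    rw [ghostOf, if_pos rfl]
  rw [Gsh_one, h2, hg]
  have hpow : qq ^ (2*(j+1)*(0+1)) ≠ 0 := pow_ne_zero _ hq
  field_simp
  ring

/-- the downward recursion across shelves -/
lemma Gsh_step (k j m : ℕ) (hm : 1 ≤ m) (hmk : m + 2 ≤ k) :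
    Gsh k j m = Gsh k j (m+2)
      + (1 + qq^(2*j+2)) * (qq^(2*(j+1)*(k-m-1)) * Gsh k (j+1) (k-m+1)
          + qq^(2*(j+1)*(k-m-2)+2*j+1) * Gsh k (j+1) (k-m)) := by
  obtain ⟨c, rfl⟩ : ∃ c, k = m + 2 + c := ⟨k - m - 2, by omega⟩
  have hq : qq ≠ 0 := qq_ne_zero
  have hA : (1 : LS) + qq^(2*j+2) ≠ 0 := one_add_qq_pow_ne _ (by omega)
  rw [show m + 2 + c - m - 1 = c + 1 from by omega,
      show m + 2 + c - m - 2 = c from by omega,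
      show m + 2 + c - m + 1 = c + 3 from by omega,
      show m + 2 + c - m = c + 2 from by omega]
  have h2 : Gsh (m+2+c) (j+1) (c+1+2)
      = (Gsh (m+2+c) j (m+2+c-(c+1+2)+1)
          - ghostOf (m+2+c) j (Gsh (m+2+c) j) (m+2+c-(c+1+2)+2)) *
        (qq ^ (2*(j+1)*(c+1+1)))⁻¹ - qq⁻¹ * Gsh (m+2+c) (j+1) (c+1+1) := rfl
  rw [show m+2+c-(c+1+2)+1 = m from by omega,
      show m+2+c-(c+1+2)+2 = m+1 from by omega,
      show c+1+2 = c+3 from rfl, show c+1+1 = c+2 from rfl] at h2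
  have hg : ghostOf (m+2+c) j (Gsh (m+2+c) j) (m+1)
      = (Gsh (m+2+c) j m + qq^(2*j+2) * Gsh (m+2+c) j (m+2)) * (1 + qq^(2*j+2))⁻¹ := by
    rw [ghostOf, if_neg (by omega)]
    norm_num
  rw [h2, hg]
  have hpow : qq ^ (2*(j+1)*(c+2)) ≠ 0 := pow_ne_zero _ hq
  field_simp
  ring

/-- one-step polynomial identity matching the downward recursion -/
lemma hpoly_one_step (k j m l : ℕ) (hm : 1 ≤ m) (hmk : m + 2 ≤ k)
    (hl : 1 ≤ l) (hlk : l ≤ k) :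
    hpoly k j m 1 l = hpoly k j (m+2) 1 l
      + (if l = k-m+1 then (1+Polynomial.X^(2*j+2)) * Polynomial.X^(2*(j+1)*(k-m-1)) else 0)
      + (if l = k-m then (1+Polynomial.X^(2*j+2)) * Polynomial.X^(2*(j+1)*(k-m-2)+2*j+1)
          else 0) := by
  obtain ⟨c, rfl⟩ : ∃ c, k = m + 2 + c := ⟨k - m - 2, by omega⟩
  rw [show m + 2 + c - m - 1 = c + 1 from by omega,
      show m + 2 + c - m - 2 = c from by omega,
      show m + 2 + c - m + 1 = c + 3 from by omega,
      show m + 2 + c - m = c + 2 from by omega]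
  rw [hpoly_one, hpoly_one, show 2*(j+1)-1 = 2*j+1 from by omega]
  by_cases h1 : l = c + 3
  · subst h1
    rw [show c+3-1 = c+2 from rfl, show c+3-2 = c+1 from rfl]
    split_ifs <;> first | (exfalso; omega) | ring
  · by_cases h2 : l = c + 2
    · subst h2
      rw [show c+2-1 = c+1 from rfl, show c+2-2 = c from rfl]
      split_ifs <;> first | (exfalso; omega) | ring
    · split_ifs <;> first | (exfalso; omega) | ring

/-- one shelf step: every official series on shelf `j` as a combination of shelf `j+1` -/
lemma onestep (k j : ℕ) (hk : 2 ≤ k) : ∀ t m : ℕ, m + t = k → 1 ≤ m →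
    Gsh k j m
      = ∑ l ∈ Finset.Icc 1 k, toLS ((hpoly k j m 1 l : Polynomial ℂ) : PS) * Gsh k (j+1) l := by
  intro t
  induction t using Nat.strong_induction_on with
  | _ t IH =>
    intro m hmt hm
    rcases t with _ | (_ | t')
    · -- t = 0, m = k
      have hmk : m = k := by omega
      rw [hmk]
      have hp : ∀ l, 1 ≤ l → l ≤ k → hpoly k j k 1 l = if l = 1 then 1 else 0 := by
        intro l h1 h2
        rw [hpoly_one]
        by_cases e1 : l = 1
        · subst e1
          rw [show (1:ℕ)-1 = 0 from rfl]
          split_ifs <;> first | (exfalso; omega) | ring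
        · split_ifs <;> first | (exfalso; omega) | ring
      have hcoef : ∀ l ∈ Finset.Icc 1 k,
          toLS ((hpoly k j k 1 l : Polynomial ℂ) : PS) * Gsh k (j+1) l
            = if l = 1 then Gsh k (j+1) l else 0 := by
        intro l hl
        simp only [Finset.mem_Icc] at hl
        rw [toL_apply, hp l hl.1 hl.2]
        split_ifs <;> simp
      rw [Finset.sum_congr rfl hcoef, Finset.sum_ite_eq',
          if_pos (Finset.mem_Icc.mpr ⟨le_refl 1, by omega⟩), Gsh_one]
    · -- t = 1, m = k - 1
      have hp : ∀ l, 1 ≤ l → l ≤ k →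
          hpoly k j m 1 l = if l = 1 then Polynomial.X^(2*j+1)
            else if l = 2 then 1 + Polynomial.X^(2*j+2) else 0 := by
        intro l h1 h2
        rw [hpoly_one, show 2*(j+1)-1 = 2*j+1 from by omega]
        by_cases e1 : l = 1
        · subst e1
          rw [show (1:ℕ)-1 = 0 from rfl]
          split_ifs <;> first | (exfalso; omega) | ring
        · by_cases e2 : l = 2
          · subst e2
            rw [show (2:ℕ)-1 = 1 from rfl, show (2:ℕ)-2 = 0 from rfl,
                show 2*(j+1)*1 = 2*j+2 from by ring]
            split_ifs <;> first | (exfalso; omega) | ring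
          · split_ifs <;> first | (exfalso; omega) | ring
      have hcoef : ∀ l ∈ Finset.Icc 1 k,
          toLS ((hpoly k j m 1 l : Polynomial ℂ) : PS) * Gsh k (j+1) l
            = (if l = 1 then qq^(2*j+1) * Gsh k (j+1) l else 0)
              + (if l = 2 then (1 + qq^(2*j+2)) * Gsh k (j+1) l else 0) := by
        intro l hl
        simp only [Finset.mem_Icc] at hl
        rw [toL_apply, hp l hl.1 hl.2]
        split_ifs <;>
          first
            | (exfalso; omega)
            | (simp only [map_add, map_mul, map_one, map_zero, map_pow, toL_X, toL_X_pow,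
                zero_mul, mul_zero, add_zero, zero_add]; try ring)
      rw [Finset.sum_congr rfl hcoef, Finset.sum_add_distrib,
          Finset.sum_ite_eq', Finset.sum_ite_eq',
          if_pos (Finset.mem_Icc.mpr ⟨le_refl 1, by omega⟩),
          if_pos (Finset.mem_Icc.mpr (⟨by omega, by omega⟩ : 1 ≤ 2 ∧ 2 ≤ k))]
      rw [show m = k - 1 from by omega, Gsh_km1 k j hk]
      ring
    · -- t = t' + 2
      have IH2 := IH t' (by omega) (m+2) (by omega) (by omega)
      have hkey : ∀ l ∈ Finset.Icc 1 k,
          toLS ((hpoly k j m 1 l : Polynomial ℂ) : PS) * Gsh k (j+1) l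
            = toLS ((hpoly k j (m+2) 1 l : Polynomial ℂ) : PS) * Gsh k (j+1) l
              + (if l = k-m+1 then
                  (1+qq^(2*j+2)) * qq^(2*(j+1)*(k-m-1)) * Gsh k (j+1) l else 0)
              + (if l = k-m then
                  (1+qq^(2*j+2)) * qq^(2*(j+1)*(k-m-2)+2*j+1) * Gsh k (j+1) l else 0) := by
        intro l hl
        simp only [Finset.mem_Icc] at hl
        rw [toL_apply, toL_apply,
            hpoly_one_step k j m l hm (by omega) hl.1 hl.2, map_add, map_add]
        split_ifs <;>
          first
            | (exfalso; omega)
            | (simp only [map_add, map_mul, map_one, map_zero, map_pow, toL_X, toL_X_pow,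
                zero_mul, mul_zero, add_zero, zero_add]; try ring)
      rw [Finset.sum_congr rfl hkey, Finset.sum_add_distrib, Finset.sum_add_distrib,
          Finset.sum_ite_eq', Finset.sum_ite_eq',
          if_pos (Finset.mem_Icc.mpr (⟨by omega, by omega⟩ : 1 ≤ k-m+1 ∧ k-m+1 ≤ k)),
          if_pos (Finset.mem_Icc.mpr (⟨by omega, by omega⟩ : 1 ≤ k-m ∧ k-m ≤ k)), ← IH2]
      rw [Gsh_step k j m hm (by omega)]
      ring

/-- expansion of `G_{(k-1)J+i}` in terms of the series on shelf `j`. -/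
theorem stmt6 (k J j i : ℕ) (hk : 2 ≤ k) (hJj : J ≤ j) (hi1 : 1 ≤ i) (hik : i ≤ k) :
    Gsh k J i =
      ∑ l ∈ Finset.Icc 1 k, toLS ((hpoly k J i (j - J) l : Polynomial ℂ) : PS) * Gsh k j l := by
  obtain ⟨d, rfl⟩ : ∃ d, j = J + d := ⟨j - J, by omega⟩
  rw [show J + d - J = d from by omega]
  clear hJj
  induction d with
  | zero =>
    have hcoef : ∀ l ∈ Finset.Icc 1 k,
        toLS ((hpoly k J i 0 l : Polynomial ℂ) : PS) * Gsh k (J+0) l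
          = if i = l then Gsh k J l else 0 := by
      intro l _
      by_cases h : i = l <;> simp [hpoly, h]
    rw [Finset.sum_congr rfl hcoef, Finset.sum_ite_eq,
        if_pos (Finset.mem_Icc.mpr ⟨hi1, hik⟩)]
  | succ d IH =>
    have h1 : ∀ m ∈ Finset.Icc 1 k,
        toLS ((hpoly k J i d m : Polynomial ℂ) : PS) * Gsh k (J+d) m
          = ∑ l ∈ Finset.Icc 1 k, toLS ((hpoly k J i d m : Polynomial ℂ) : PS) *
              (toLS ((hpoly k (J+d) m 1 l : Polynomial ℂ) : PS) * Gsh k (J+d+1) l) := by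
      intro m hm
      simp only [Finset.mem_Icc] at hm
      rw [onestep k (J+d) hk (k - m) m (by omega) hm.1, Finset.mul_sum]
    rw [IH, Finset.sum_congr rfl h1, Finset.sum_comm]
    rw [show J + (d+1) = (J + d) + 1 from rfl]
    refine Finset.sum_congr rfl fun l hl => ?_
    simp only [Finset.mem_Icc] at hl
    rw [hpoly_succ k J i d l hl.1 hl.2, toL_apply, map_sum toL _ _, Finset.sum_mul]
    refine Finset.sum_congr rfl fun m _ => ?_
    rw [map_mul, ← toL_apply, ← toL_apply]
    ring


end BGG
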